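/- arXiv:2102.05959 — 4 statements merged into one kernel-verified Lean document; each statement's English description precedes it below -/
import Mathlib

section
/- Let f ∈ P_{s+2} and g ∈ P_{r+2} be homogeneous polynomials (r, s ≥ 0 integers) with ‖f‖ ≤ F and ‖g‖ ≤ G for some reals F, G ≥ 0. Then ‖{f,g}‖ ≤ (s+2)(r+2)·F·G. -/
open MvPolynomial

/-- The Poisson bracket `{f,g} = ∑_j (∂f/∂v_j ∂g/∂u_j − ∂f/∂u_j ∂g/∂v_j)`. -/
noncomputable def poissonBracket (n : ℕ) (f g : MvPolynomial (Fin n ⊕ Fin n) ℂ) :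
    MvPolynomial (Fin n ⊕ Fin n) ℂ :=
  ∑ j : Fin n,
    (pderiv (Sum.inr j) f * pderiv (Sum.inl j) g -
      pderiv (Sum.inl j) f * pderiv (Sum.inr j) g)

/-- The ℓ¹-norm `‖f‖ = ∑ |c_{ℓ,ℓ̃}|` of the coefficients of a polynomial. -/
noncomputable def polyNorm (n : ℕ) (f : MvPolynomial (Fin n ⊕ Fin n) ℂ) : ℝ :=
  ∑ d ∈ f.support, ‖coeff d f‖

/-!
The coefficient ℓ¹-norm is submultiplicative, and differentiating a monomial in the variable `xᵢ`
multiplies its coefficient by the exponent of `xᵢ`. For a polynomial homogeneous of degree `k`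
each exponent is at most `k` and the exponents of a monomial sum to `k`, so `‖∂ᵢ g‖ ≤ k ‖g‖`
for every `i` and `∑ᵢ ‖∂ᵢ f‖ ≤ k ‖f‖`. Each of the `2n` products in `{f, g}` is then bounded by
`‖∂ᵢ f‖ · (r + 2) ‖g‖`.
-/

namespace MvPolynomial

theorem IsHomogeneous.degree_eq_of_mem_support {σ R : Type*} [CommSemiring R]
    {p : MvPolynomial σ R} {k : ℕ}
    (hp : p.IsHomogeneous k) {d : σ →₀ ℕ} (hd : d ∈ p.support) : d.degree = k := by
  rw [Finsupp.degree_eq_weight_one]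
  exact hp (mem_support_iff.mp hd)

variable {σ R : Type*} [SeminormedCommRing R]

noncomputable def l1Norm (p : MvPolynomial σ R) : ℝ :=
  ∑ d ∈ p.support, ‖coeff d p‖

theorem l1Norm_eq_sum_of_support_subset {p : MvPolynomial σ R}
    {S : Finset (σ →₀ ℕ)} (hS : p.support ⊆ S) :
    p.l1Norm = ∑ d ∈ S, ‖coeff d p‖ :=
  Finset.sum_subset hS fun d _ hd => by rw [notMem_support_iff.mp hd, norm_zero]

theorem l1Norm_nonneg (p : MvPolynomial σ R) : 0 ≤ p.l1Norm :=
  Finset.sum_nonneg fun _ _ => norm_nonneg _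

@[simp]
theorem l1Norm_zero : (0 : MvPolynomial σ R).l1Norm = 0 := by
  simp [l1Norm]

@[simp]
theorem l1Norm_neg (p : MvPolynomial σ R) : (-p).l1Norm = p.l1Norm := by
  simp [l1Norm, support_neg]

@[simp]
theorem l1Norm_monomial (d : σ →₀ ℕ) (c : R) : (monomial d c).l1Norm = ‖c‖ := by
  classical
  by_cases hc : c = 0
  · simp [hc]
  · rw [l1Norm, support_monomial, if_neg hc, Finset.sum_singleton, coeff_monomial, if_pos rfl]

theorem l1Norm_add_le (p q : MvPolynomial σ R) : (p + q).l1Norm ≤ p.l1Norm + q.l1Norm := by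
  classical
  rw [l1Norm_eq_sum_of_support_subset support_add,
    l1Norm_eq_sum_of_support_subset (Finset.subset_union_left (s₂ := q.support)),
    l1Norm_eq_sum_of_support_subset (Finset.subset_union_right (s₁ := p.support)),
    ← Finset.sum_add_distrib]
  exact Finset.sum_le_sum fun d _ => (coeff_add d p q).symm ▸ norm_add_le _ _

theorem l1Norm_sub_le (p q : MvPolynomial σ R) : (p - q).l1Norm ≤ p.l1Norm + q.l1Norm := by
  simpa [sub_eq_add_neg] using l1Norm_add_le p (-q)

theorem l1Norm_sum_le {ι : Type*} (t : Finset ι) (p : ι → MvPolynomial σ R) :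
    (∑ i ∈ t, p i).l1Norm ≤ ∑ i ∈ t, (p i).l1Norm :=
  Finset.le_sum_of_subadditive l1Norm l1Norm_zero.le l1Norm_add_le t p

theorem l1Norm_mul_le (p q : MvPolynomial σ R) : (p * q).l1Norm ≤ p.l1Norm * q.l1Norm := by
  conv_lhs => rw [p.as_sum, q.as_sum, Finset.sum_mul_sum]
  calc _ ≤ ∑ d ∈ p.support, ∑ e ∈ q.support,
          (monomial d (coeff d p) * monomial e (coeff e q)).l1Norm :=
        (l1Norm_sum_le _ _).trans (Finset.sum_le_sum fun d _ => l1Norm_sum_le _ _)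
    _ ≤ p.l1Norm * q.l1Norm := by
        rw [l1Norm, l1Norm, Finset.sum_mul_sum]
        gcongr with d _ e _
        rw [monomial_mul, l1Norm_monomial]
        exact norm_mul_le _ _

theorem l1Norm_pderiv_le (i : σ) (p : MvPolynomial σ R) :
    (pderiv i p).l1Norm ≤ ∑ d ∈ p.support, d i * ‖coeff d p‖ := by
  conv_lhs => rw [p.as_sum, map_sum]
  refine (l1Norm_sum_le _ _).trans (Finset.sum_le_sum fun d _ => ?_)
  rw [pderiv_monomial, l1Norm_monomial, mul_comm, ← nsmul_eq_mul]
  exact norm_nsmul_le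

theorem IsHomogeneous.l1Norm_pderiv_le {p : MvPolynomial σ R} {k : ℕ} (hp : p.IsHomogeneous k)
    (i : σ) : (pderiv i p).l1Norm ≤ k * p.l1Norm := by
  refine (MvPolynomial.l1Norm_pderiv_le i p).trans ?_
  rw [l1Norm, Finset.mul_sum]
  gcongr with d hd
  exact_mod_cast hp.degree_eq_of_mem_support hd ▸ Finsupp.le_degree i d

-- Euler's identity `∑ᵢ xᵢ ∂ᵢ p = k p`, read off on coefficient norms.
theorem IsHomogeneous.sum_l1Norm_pderiv_le [Fintype σ] {p : MvPolynomial σ R} {k : ℕ}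
    (hp : p.IsHomogeneous k) : ∑ i, (pderiv i p).l1Norm ≤ k * p.l1Norm := by
  calc _ ≤ ∑ i, ∑ d ∈ p.support, d i * ‖coeff d p‖ :=
        Finset.sum_le_sum fun i _ => MvPolynomial.l1Norm_pderiv_le i p
    _ = k * p.l1Norm := by
        rw [Finset.sum_comm, l1Norm, Finset.mul_sum]
        refine Finset.sum_congr rfl fun d hd => ?_
        rw [← Finset.sum_mul, ← Nat.cast_sum, ← Finsupp.degree_eq_sum,
          hp.degree_eq_of_mem_support hd]

end MvPolynomial

theorem polyNorm_eq_l1Norm (n : ℕ) (f : MvPolynomial (Fin n ⊕ Fin n) ℂ) :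
    polyNorm n f = f.l1Norm :=
  rfl

theorem l1Norm_poissonBracket_le (n : ℕ) (f g : MvPolynomial (Fin n ⊕ Fin n) ℂ) {C : ℝ}
    (hg : ∀ i, (pderiv i g).l1Norm ≤ C) :
    (poissonBracket n f g).l1Norm ≤ (∑ i, (pderiv i f).l1Norm) * C := by
  rw [poissonBracket, Fintype.sum_sum_type, ← Finset.sum_add_distrib, Finset.sum_mul]
  refine (l1Norm_sum_le _ _).trans (Finset.sum_le_sum fun j _ => ?_)
  calc _ ≤ (pderiv (Sum.inr j) f).l1Norm * (pderiv (Sum.inl j) g).l1Norm +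
        (pderiv (Sum.inl j) f).l1Norm * (pderiv (Sum.inr j) g).l1Norm :=
        (l1Norm_sub_le _ _).trans (add_le_add (l1Norm_mul_le _ _) (l1Norm_mul_le _ _))
    _ ≤ (pderiv (Sum.inr j) f).l1Norm * C + (pderiv (Sum.inl j) f).l1Norm * C := by
        gcongr <;> first | exact l1Norm_nonneg _ | exact hg _
    _ = _ := by ring

theorem stmt1_general (n : ℕ) (r s : ℕ)
    (f g : MvPolynomial (Fin n ⊕ Fin n) ℂ)
    (hf : f.IsHomogeneous (s + 2)) (hg : g.IsHomogeneous (r + 2))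
    (F G : ℝ)
    (hF : polyNorm n f ≤ F) (hG : polyNorm n g ≤ G) :
    polyNorm n (poissonBracket n f g) ≤ ((s : ℝ) + 2) * ((r : ℝ) + 2) * F * G := by
  simp only [polyNorm_eq_l1Norm] at hF hG ⊢
  have hg' : ∀ i, (pderiv i g).l1Norm ≤ ((r : ℝ) + 2) * G := fun i =>
    (hg.l1Norm_pderiv_le i).trans (by push_cast; gcongr)
  have hf' : ∑ i, (pderiv i f).l1Norm ≤ ((s : ℝ) + 2) * F :=
    hf.sum_l1Norm_pderiv_le.trans (by push_cast; gcongr)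
  have hG0 : 0 ≤ G := (l1Norm_nonneg g).trans hG
  calc _ ≤ (∑ i, (pderiv i f).l1Norm) * (((r : ℝ) + 2) * G) := l1Norm_poissonBracket_le n f g hg'
    _ ≤ ((s : ℝ) + 2) * F * (((r : ℝ) + 2) * G) := by gcongr
    _ = _ := by ring

theorem stmt1 (n : ℕ) (hn : 1 ≤ n) (r s : ℕ)
    (f g : MvPolynomial (Fin n ⊕ Fin n) ℂ)
    (hf : f.IsHomogeneous (s + 2)) (hg : g.IsHomogeneous (r + 2))
    (F G : ℝ) (hF0 : 0 ≤ F) (hG0 : 0 ≤ G)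
    (hF : polyNorm n f ≤ F) (hG : polyNorm n g ≤ G) :
    polyNorm n (poissonBracket n f g) ≤ ((s : ℝ) + 2) * ((r : ℝ) + 2) * F * G :=
  stmt1_general n r s f g hf hg F G hF hG
end

section
/- Let χ ∈ P_{r+2} be a homogeneous polynomial with expansion χ = Σ_{|k|+|k̃|=r+2} c_{k,k̃} u^k v^k̃ and set D = Σ_{k,k̃} |c_{k,k̃}| · max_{1≤j≤n} max(k_j, k̃_j). Let g ∈ P_{s+2}. Then for every integer j ≥ 1, ‖(1/j!) L_χ^j g‖ ≤ (∏_{i=0}^{j−1}(s+ir+2) / j!) · D^j · ‖g‖. -/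
open MvPolynomial

/-- The constant `D = ∑_{k,k̃} |c_{k,k̃}| · max_j max(k_j, k̃_j)` associated with a
generating function `χ = ∑ c_{k,k̃} u^k v^k̃`. -/
noncomputable def Dconst (n : ℕ) (χ : MvPolynomial (Fin n ⊕ Fin n) ℂ) : ℝ :=
  ∑ d ∈ χ.support,
    ‖coeff d χ‖ *
      ((Finset.univ.sup fun j : Fin n => max (d (Sum.inl j)) (d (Sum.inr j)) : ℕ) : ℝ)

/-!
The ℓ¹-norm is submultiplicative, and a partial derivative multiplies the coefficient of
`x^d` by `d_i`. Hence `‖∂_i χ‖ ≤ D` for every variable, while for `f` homogeneous of degree `t`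
Euler's identity gives `∑_i ‖∂_i f‖ ≤ t ‖f‖`. Together, `‖{χ, f}‖ ≤ D t ‖f‖`. Since `L_χ`
raises the degree by `r`, the `i`-th iterate of `L_χ` applied to `g` is homogeneous of degree
`s + i r + 2`, and iterating the estimate gives the product `∏_{i<j} (s + i r + 2)`.
-/

section PolyNorm

variable {n : ℕ}

lemma polyNorm_eq_sum_of_support_subset (f : MvPolynomial (Fin n ⊕ Fin n) ℂ)
    {S : Finset ((Fin n ⊕ Fin n) →₀ ℕ)} (hS : f.support ⊆ S) :
    polyNorm n f = ∑ d ∈ S, ‖coeff d f‖ :=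
  Finset.sum_subset hS fun d _ hd => by rw [notMem_support_iff.mp hd, norm_zero]

lemma polyNorm_nonneg (f : MvPolynomial (Fin n ⊕ Fin n) ℂ) : 0 ≤ polyNorm n f :=
  Finset.sum_nonneg fun _ _ => norm_nonneg _

lemma polyNorm_zero : polyNorm n 0 = 0 := by simp [polyNorm]

lemma polyNorm_add_le (f g : MvPolynomial (Fin n ⊕ Fin n) ℂ) :
    polyNorm n (f + g) ≤ polyNorm n f + polyNorm n g := by
  classical
  rw [polyNorm_eq_sum_of_support_subset (f + g) support_add,
    polyNorm_eq_sum_of_support_subset f Finset.subset_union_left,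
    polyNorm_eq_sum_of_support_subset g Finset.subset_union_right, ← Finset.sum_add_distrib]
  exact Finset.sum_le_sum fun d _ => (coeff_add d f g).symm ▸ norm_add_le _ _

lemma polyNorm_sub_le (f g : MvPolynomial (Fin n ⊕ Fin n) ℂ) :
    polyNorm n (f - g) ≤ polyNorm n f + polyNorm n g := by
  classical
  rw [polyNorm_eq_sum_of_support_subset (f - g) (support_sub (Fin n ⊕ Fin n) f g),
    polyNorm_eq_sum_of_support_subset f Finset.subset_union_left,
    polyNorm_eq_sum_of_support_subset g Finset.subset_union_right, ← Finset.sum_add_distrib]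
  exact Finset.sum_le_sum fun d _ => (coeff_sub _ d f g).symm ▸ norm_sub_le _ _

lemma polyNorm_smul (c : ℂ) (f : MvPolynomial (Fin n ⊕ Fin n) ℂ) :
    polyNorm n (c • f) = ‖c‖ * polyNorm n f := by
  rw [polyNorm_eq_sum_of_support_subset (c • f) support_smul, polyNorm, Finset.mul_sum]
  simp only [coeff_smul, smul_eq_mul, norm_mul]

lemma polyNorm_sum_le {ι : Type*} (S : Finset ι) (F : ι → MvPolynomial (Fin n ⊕ Fin n) ℂ) :
    polyNorm n (∑ i ∈ S, F i) ≤ ∑ i ∈ S, polyNorm n (F i) :=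
  Finset.le_sum_of_subadditive (polyNorm n) polyNorm_zero.le polyNorm_add_le S F

lemma polyNorm_monomial_le (d : (Fin n ⊕ Fin n) →₀ ℕ) (c : ℂ) :
    polyNorm n (monomial d c) ≤ ‖c‖ := by
  rw [polyNorm, support_monomial]
  split_ifs with hc
  · simp [hc]
  · simp

lemma polyNorm_mul_le (f g : MvPolynomial (Fin n ⊕ Fin n) ℂ) :
    polyNorm n (f * g) ≤ polyNorm n f * polyNorm n g :=
  calc polyNorm n (f * g)
      = polyNorm n (∑ a ∈ f.support, ∑ b ∈ g.support,
          monomial (a + b) (coeff a f * coeff b g)) := by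
        conv_lhs => rw [f.as_sum, g.as_sum, Finset.sum_mul_sum]
        simp only [monomial_mul]
    _ ≤ ∑ a ∈ f.support, ∑ b ∈ g.support, ‖coeff a f * coeff b g‖ :=
        (polyNorm_sum_le _ _).trans <| Finset.sum_le_sum fun _ _ =>
          (polyNorm_sum_le _ _).trans <| Finset.sum_le_sum fun _ _ => polyNorm_monomial_le _ _
    _ = polyNorm n f * polyNorm n g := by
        simp only [norm_mul, polyNorm, Finset.sum_mul_sum]

lemma polyNorm_pderiv_le (f : MvPolynomial (Fin n ⊕ Fin n) ℂ) (i : Fin n ⊕ Fin n) :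
    polyNorm n (pderiv i f) ≤ ∑ d ∈ f.support, ‖coeff d f‖ * (d i : ℝ) := by
  conv_lhs => rw [f.as_sum, map_sum]
  refine (polyNorm_sum_le _ _).trans <| Finset.sum_le_sum fun d _ => ?_
  rw [pderiv_monomial]
  exact (polyNorm_monomial_le _ _).trans_eq (by rw [norm_mul, Complex.norm_natCast])

lemma sum_polyNorm_pderiv_le {f : MvPolynomial (Fin n ⊕ Fin n) ℂ} {t : ℕ}
    (hf : f.IsHomogeneous t) :
    ∑ i, polyNorm n (pderiv i f) ≤ t * polyNorm n f :=
  calc ∑ i, polyNorm n (pderiv i f)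
      ≤ ∑ i, ∑ d ∈ f.support, ‖coeff d f‖ * (d i : ℝ) :=
        Finset.sum_le_sum fun i _ => polyNorm_pderiv_le f i
    _ = ∑ d ∈ f.support, ‖coeff d f‖ * ∑ i, (d i : ℝ) := by
        rw [Finset.sum_comm]
        simp only [Finset.mul_sum]
    _ = t * polyNorm n f := by
        rw [polyNorm, Finset.mul_sum]
        refine Finset.sum_congr rfl fun d hd => ?_
        have hdeg : d.degree = t := by
          rw [Finsupp.degree_eq_weight_one]
          exact hf (mem_support_iff.mp hd)
        rw [← Nat.cast_sum, ← Finsupp.degree_eq_sum, hdeg, mul_comm]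

end PolyNorm

section Bracket

variable {n : ℕ}

lemma Dconst_nonneg (χ : MvPolynomial (Fin n ⊕ Fin n) ℂ) : 0 ≤ Dconst n χ :=
  Finset.sum_nonneg fun _ _ => mul_nonneg (norm_nonneg _) (Nat.cast_nonneg _)

lemma apply_le_sup_max (d : (Fin n ⊕ Fin n) →₀ ℕ) (i : Fin n ⊕ Fin n) :
    d i ≤ Finset.univ.sup fun j : Fin n => max (d (Sum.inl j)) (d (Sum.inr j)) := by
  obtain j | j := i
  · exact (le_max_left _ _).trans
      (Finset.le_sup (f := fun j => max (d (Sum.inl j)) (d (Sum.inr j))) (Finset.mem_univ j))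
  · exact (le_max_right _ _).trans
      (Finset.le_sup (f := fun j => max (d (Sum.inl j)) (d (Sum.inr j))) (Finset.mem_univ j))

lemma polyNorm_pderiv_le_Dconst (χ : MvPolynomial (Fin n ⊕ Fin n) ℂ) (i : Fin n ⊕ Fin n) :
    polyNorm n (pderiv i χ) ≤ Dconst n χ :=
  (polyNorm_pderiv_le χ i).trans <| Finset.sum_le_sum fun d _ =>
    mul_le_mul_of_nonneg_left (Nat.cast_le.mpr (apply_le_sup_max d i)) (norm_nonneg _)

lemma polyNorm_poissonBracket_le (χ : MvPolynomial (Fin n ⊕ Fin n) ℂ)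
    {f : MvPolynomial (Fin n ⊕ Fin n) ℂ} {t : ℕ} (hf : f.IsHomogeneous t) :
    polyNorm n (poissonBracket n χ f) ≤ Dconst n χ * (t * polyNorm n f) := by
  have hterm : ∀ i k, polyNorm n (pderiv i χ * pderiv k f) ≤
      Dconst n χ * polyNorm n (pderiv k f) := fun i k =>
    (polyNorm_mul_le _ _).trans <|
      mul_le_mul_of_nonneg_right (polyNorm_pderiv_le_Dconst χ i) (polyNorm_nonneg _)
  calc polyNorm n (poissonBracket n χ f)
      ≤ ∑ j : Fin n, (Dconst n χ * polyNorm n (pderiv (Sum.inl j) f) +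
          Dconst n χ * polyNorm n (pderiv (Sum.inr j) f)) :=
        (polyNorm_sum_le _ _).trans <| Finset.sum_le_sum fun j _ =>
          (polyNorm_sub_le _ _).trans (add_le_add (hterm _ _) (hterm _ _))
    _ = Dconst n χ * ∑ i, polyNorm n (pderiv i f) := by
        rw [Fintype.sum_sum_type, ← Finset.sum_add_distrib, Finset.mul_sum]
        simp only [mul_add]
    _ ≤ Dconst n χ * (t * polyNorm n f) :=
        mul_le_mul_of_nonneg_left (sum_polyNorm_pderiv_le hf) (Dconst_nonneg χ)

lemma IsHomogeneous.poissonBracket {χ f : MvPolynomial (Fin n ⊕ Fin n) ℂ} {a b : ℕ}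
    (hχ : χ.IsHomogeneous a) (hf : f.IsHomogeneous b) :
    (poissonBracket n χ f).IsHomogeneous (a - 1 + (b - 1)) := by
  refine IsHomogeneous.sum _ _ _ fun j _ => ?_
  simp only [← mem_homogeneousSubmodule]
  exact Submodule.sub_mem _ (hχ.pderiv.mul hf.pderiv) (hχ.pderiv.mul hf.pderiv)

end Bracket

section Iterate

variable {n r s : ℕ} {χ g : MvPolynomial (Fin n ⊕ Fin n) ℂ}

lemma isHomogeneous_iterate_poissonBracket (hχ : χ.IsHomogeneous (r + 2))
    (hg : g.IsHomogeneous (s + 2)) (m : ℕ) :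
    ((poissonBracket n χ)^[m] g).IsHomogeneous (s + m * r + 2) := by
  induction m with
  | zero => simpa using hg
  | succ m ih =>
    rw [Function.iterate_succ_apply']
    convert IsHomogeneous.poissonBracket hχ ih using 1
    simp only [add_mul, one_mul]
    omega

lemma polyNorm_iterate_poissonBracket_le (hχ : χ.IsHomogeneous (r + 2))
    (hg : g.IsHomogeneous (s + 2)) (m : ℕ) :
    polyNorm n ((poissonBracket n χ)^[m] g) ≤
      (∏ i ∈ Finset.range m, ((s : ℝ) + i * r + 2)) * Dconst n χ ^ m * polyNorm n g := by
  induction m with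
  | zero => simp
  | succ m ih =>
    rw [Function.iterate_succ_apply']
    calc polyNorm n (poissonBracket n χ ((poissonBracket n χ)^[m] g))
        ≤ Dconst n χ * (((s + m * r + 2 : ℕ) : ℝ) * polyNorm n ((poissonBracket n χ)^[m] g)) :=
          polyNorm_poissonBracket_le χ (isHomogeneous_iterate_poissonBracket hχ hg m)
      _ ≤ Dconst n χ * (((s + m * r + 2 : ℕ) : ℝ) *
            ((∏ i ∈ Finset.range m, ((s : ℝ) + i * r + 2)) * Dconst n χ ^ m * polyNorm n g)) := by
          gcongr
          exact Dconst_nonneg χ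
      _ = (∏ i ∈ Finset.range (m + 1), ((s : ℝ) + i * r + 2)) *
            Dconst n χ ^ (m + 1) * polyNorm n g := by
          rw [Finset.prod_range_succ]
          push_cast
          ring

end Iterate

theorem stmt2_general (n : ℕ) (r s : ℕ)
    (χ g : MvPolynomial (Fin n ⊕ Fin n) ℂ)
    (hχ : χ.IsHomogeneous (r + 2)) (hg : g.IsHomogeneous (s + 2)) :
    ∀ j : ℕ, 1 ≤ j →
      polyNorm n (((j.factorial : ℂ)⁻¹) • (poissonBracket n χ)^[j] g) ≤
        ((∏ i ∈ Finset.range j, ((s : ℝ) + (i : ℝ) * (r : ℝ) + 2)) / (j.factorial : ℝ)) *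
          (Dconst n χ) ^ j * polyNorm n g := by
  intro j _
  rw [polyNorm_smul, norm_inv, Complex.norm_natCast, div_mul_eq_mul_div, div_mul_eq_mul_div,
    inv_mul_eq_div]
  gcongr
  exact polyNorm_iterate_poissonBracket_le hχ hg j

theorem stmt2 (n : ℕ) (hn : 1 ≤ n) (r s : ℕ)
    (χ g : MvPolynomial (Fin n ⊕ Fin n) ℂ)
    (hχ : χ.IsHomogeneous (r + 2)) (hg : g.IsHomogeneous (s + 2)) :
    ∀ j : ℕ, 1 ≤ j →
      polyNorm n (((j.factorial : ℂ)⁻¹) • (poissonBracket n χ)^[j] g) ≤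
        ((∏ i ∈ Finset.range j, ((s : ℝ) + (i : ℝ) * (r : ℝ) + 2)) / (j.factorial : ℝ)) *
          (Dconst n χ) ^ j * polyNorm n g :=
  stmt2_general n r s χ g hχ hg
end

section
/- Let ω ∈ ℝⁿ satisfy ω·(ℓ−ℓ̃) ≠ 0 for all multi-indices ℓ, ℓ̃ ∈ ℕⁿ with ℓ ≠ ℓ̃ and |ℓ|+|ℓ̃| = r+2. Let Z₀ = Σ_{j=1}^n i ω_j u_j v_j and let f = Σ_{|ℓ|+|ℓ̃|=r+2} c_{ℓ,ℓ̃} u^ℓ v^ℓ̃ ∈ P_{r+2}. Define the generating function χ = Σ_{|ℓ|+|ℓ̃|=r+2, ℓ≠ℓ̃} (c_{ℓ,ℓ̃} / (i ω·(ℓ−ℓ̃))) u^ℓ v^ℓ̃ and the normal-form term Z = Σ_{2|ℓ|=r+2} c_{ℓ,ℓ} u^ℓ v^ℓ. Then χ solves the homological equation L_χ Z₀ + f = Z. -/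
open MvPolynomial

/-- The quadratic Hamiltonian `Z₀ = ∑_j i ω_j u_j v_j` of `n` harmonic oscillators. -/
noncomputable def oscHam (n : ℕ) (ω : Fin n → ℝ) : MvPolynomial (Fin n ⊕ Fin n) ℂ :=
  ∑ j : Fin n, C (Complex.I * (ω j : ℂ)) * (X (Sum.inl j) * X (Sum.inr j))

open Classical in
/-- The generating function `χ = ∑_{ℓ≠ℓ̃} (c_{ℓ,ℓ̃} / (i ω·(ℓ−ℓ̃))) u^ℓ v^ℓ̃` built from
the off-diagonal monomials of `f` (for a monomial exponent `d`, `ℓ_j = d (inl j)` and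
`ℓ̃_j = d (inr j)`). -/
noncomputable def genFun (n : ℕ) (ω : Fin n → ℝ) (f : MvPolynomial (Fin n ⊕ Fin n) ℂ) :
    MvPolynomial (Fin n ⊕ Fin n) ℂ :=
  ∑ d ∈ f.support.filter fun d => ∃ j : Fin n, d (Sum.inl j) ≠ d (Sum.inr j),
    monomial d
      (coeff d f /
        (Complex.I *
          ((∑ j : Fin n, ω j * ((d (Sum.inl j) : ℝ) - (d (Sum.inr j) : ℝ)) : ℝ) : ℂ)))

open Classical in
/-- The normal-form part `Z = ∑_{ℓ} c_{ℓ,ℓ} u^ℓ v^ℓ` of `f`: the sum of the monomials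
of `f` with equal exponents on the `u` and `v` variables. -/
noncomputable def normalPart (n : ℕ) (f : MvPolynomial (Fin n ⊕ Fin n) ℂ) :
    MvPolynomial (Fin n ⊕ Fin n) ℂ :=
  ∑ d ∈ f.support.filter fun d => ∀ j : Fin n, d (Sum.inl j) = d (Sum.inr j),
    monomial d (coeff d f)

/-!
Every monomial `u^ℓ v^ℓ̃` is an eigenvector of `{·, Z₀}`:
`{u^ℓ v^ℓ̃, Z₀} = -i ω·(ℓ−ℓ̃) u^ℓ v^ℓ̃`. Dividing the off-diagonal coefficients of `f` by
`i ω·(ℓ−ℓ̃)`, which is nonzero by the non-resonance condition, therefore makes `{χ, Z₀}` cancel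
exactly the off-diagonal part of `f`, and what remains is its diagonal part `Z`.
-/

open Classical in
noncomputable def offDiagonalPart (n : ℕ) (f : MvPolynomial (Fin n ⊕ Fin n) ℂ) :
    MvPolynomial (Fin n ⊕ Fin n) ℂ :=
  ∑ d ∈ f.support.filter fun d => ∃ j : Fin n, d (Sum.inl j) ≠ d (Sum.inr j),
    monomial d (coeff d f)

variable {n : ℕ}

def smallDivisor (ω : Fin n → ℝ) (d : Fin n ⊕ Fin n →₀ ℕ) : ℝ :=
  ∑ j, ω j * ((d (Sum.inl j) : ℝ) - (d (Sum.inr j) : ℝ))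

theorem poissonBracket_sum_left {α : Type*} (s : Finset α)
    (F : α → MvPolynomial (Fin n ⊕ Fin n) ℂ) (g : MvPolynomial (Fin n ⊕ Fin n) ℂ) :
    poissonBracket n (∑ a ∈ s, F a) g = ∑ a ∈ s, poissonBracket n (F a) g := by
  simp only [poissonBracket, map_sum, Finset.sum_mul, ← Finset.sum_sub_distrib]
  exact Finset.sum_comm

theorem pderiv_inl_oscHam (ω : Fin n → ℝ) (j : Fin n) :
    pderiv (Sum.inl j) (oscHam n ω) = C (Complex.I * (ω j : ℂ)) * X (Sum.inr j) := by
  classical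
  rw [oscHam, map_sum, Finset.sum_eq_single j]
  · simp [pderiv_X]
  · intro k _ hk
    simp [pderiv_X, hk.symm]
  · simp

theorem pderiv_inr_oscHam (ω : Fin n → ℝ) (j : Fin n) :
    pderiv (Sum.inr j) (oscHam n ω) = C (Complex.I * (ω j : ℂ)) * X (Sum.inl j) := by
  classical
  rw [oscHam, map_sum, Finset.sum_eq_single j]
  · simp [pderiv_X]
  · intro k _ hk
    simp [pderiv_X, hk.symm]
  · simp

theorem poissonBracket_monomial_oscHam (ω : Fin n → ℝ) (d : Fin n ⊕ Fin n →₀ ℕ) (c : ℂ) :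
    poissonBracket n (monomial d c) (oscHam n ω) =
      monomial d (-(Complex.I * smallDivisor ω d) * c) := by
  have term (j : Fin n) :
      pderiv (Sum.inr j) (monomial d c) * pderiv (Sum.inl j) (oscHam n ω) -
        pderiv (Sum.inl j) (monomial d c) * pderiv (Sum.inr j) (oscHam n ω) =
      monomial d (Complex.I * ω j * ((d (Sum.inr j) : ℂ) - d (Sum.inl j)) * c) := by
    rw [pderiv_inl_oscHam, pderiv_inr_oscHam, mul_left_comm, mul_left_comm _ (C _),
      mul_comm _ (X _), mul_comm _ (X _), X_mul_pderiv_monomial, X_mul_pderiv_monomial,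
      smul_monomial, smul_monomial, C_mul_monomial, C_mul_monomial, ← map_sub, nsmul_eq_mul,
      nsmul_eq_mul]
    congr 1
    ring
  rw [poissonBracket, Finset.sum_congr rfl fun j _ => term j, ← map_sum, smallDivisor]
  congr 1
  push_cast
  rw [Finset.mul_sum, ← Finset.sum_neg_distrib, Finset.sum_mul]
  exact Finset.sum_congr rfl fun j _ => by ring

theorem smallDivisor_ne_zero_of_mem_support {r : ℕ} {ω : Fin n → ℝ}
    (hω : ∀ ℓ ℓt : Fin n → ℕ, ℓ ≠ ℓt → (∑ j : Fin n, (ℓ j + ℓt j)) = r + 2 →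
      (∑ j : Fin n, ω j * ((ℓ j : ℝ) - (ℓt j : ℝ))) ≠ 0)
    {f : MvPolynomial (Fin n ⊕ Fin n) ℂ} (hf : f.IsHomogeneous (r + 2))
    {d : Fin n ⊕ Fin n →₀ ℕ} (hd : d ∈ f.support) (hoff : ∃ j, d (Sum.inl j) ≠ d (Sum.inr j)) :
    smallDivisor ω d ≠ 0 := by
  obtain ⟨j, hj⟩ := hoff
  refine hω _ _ (fun h => hj (congrFun h j)) ?_
  rw [Finset.sum_add_distrib, ← Fintype.sum_sum_type, ← Finsupp.degree_eq_sum,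
    Finsupp.degree_eq_weight_one]
  exact hf (mem_support_iff.mp hd)

open Classical in
theorem poissonBracket_genFun_oscHam {ω : Fin n → ℝ} {f : MvPolynomial (Fin n ⊕ Fin n) ℂ}
    (hω : ∀ d ∈ f.support, (∃ j, d (Sum.inl j) ≠ d (Sum.inr j)) → smallDivisor ω d ≠ 0) :
    poissonBracket n (genFun n ω f) (oscHam n ω) = -offDiagonalPart n f := by
  rw [genFun, offDiagonalPart, poissonBracket_sum_left, ← Finset.sum_neg_distrib]
  refine Finset.sum_congr rfl fun d hd => ?_
  rw [Finset.mem_filter] at hd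
  have hS : Complex.I * smallDivisor ω d ≠ 0 :=
    mul_ne_zero Complex.I_ne_zero (Complex.ofReal_ne_zero.mpr (hω d hd.1 hd.2))
  rw [poissonBracket_monomial_oscHam, ← map_neg, neg_mul]
  exact congrArg (monomial d ∘ Neg.neg) (mul_div_cancel₀ _ hS)

open Classical in
theorem normalPart_add_offDiagonalPart (f : MvPolynomial (Fin n ⊕ Fin n) ℂ) :
    normalPart n f + offDiagonalPart n f = f := by
  have hoff : f.support.filter (fun d => ∃ j : Fin n, d (Sum.inl j) ≠ d (Sum.inr j)) =
      f.support.filter (fun d => ¬ ∀ j : Fin n, d (Sum.inl j) = d (Sum.inr j)) :=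
    Finset.filter_congr fun _ _ => not_forall.symm
  rw [normalPart, offDiagonalPart, hoff, Finset.sum_filter_add_sum_filter_not,
    f.support_sum_monomial_coeff]

theorem stmt5_general (n : ℕ) (r : ℕ) (ω : Fin n → ℝ)
    (hω : ∀ ℓ ℓt : Fin n → ℕ, ℓ ≠ ℓt → (∑ j : Fin n, (ℓ j + ℓt j)) = r + 2 →
      (∑ j : Fin n, ω j * ((ℓ j : ℝ) - (ℓt j : ℝ))) ≠ 0)
    (f : MvPolynomial (Fin n ⊕ Fin n) ℂ) (hf : f.IsHomogeneous (r + 2)) :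
    poissonBracket n (genFun n ω f) (oscHam n ω) + f = normalPart n f := by
  rw [poissonBracket_genFun_oscHam fun d hd hoff =>
      smallDivisor_ne_zero_of_mem_support hω hf hd hoff,
    neg_add_eq_iff_eq_add, add_comm]
  exact (normalPart_add_offDiagonalPart f).symm

theorem stmt5 (n : ℕ) (hn : 1 ≤ n) (r : ℕ) (ω : Fin n → ℝ)
    (hω : ∀ ℓ ℓt : Fin n → ℕ, ℓ ≠ ℓt → (∑ j : Fin n, (ℓ j + ℓt j)) = r + 2 →
      (∑ j : Fin n, ω j * ((ℓ j : ℝ) - (ℓt j : ℝ))) ≠ 0)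
    (f : MvPolynomial (Fin n ⊕ Fin n) ℂ) (hf : f.IsHomogeneous (r + 2)) :
    poissonBracket n (genFun n ω f) (oscHam n ω) + f = normalPart n f :=
  stmt5_general n r ω hω f hf
end

section
/- In the setting of the homological equation: let ω ∈ ℝⁿ satisfy ω·(ℓ−ℓ̃) ≠ 0 for all multi-indices ℓ ≠ ℓ̃ with |ℓ|+|ℓ̃| = r+2, let f = Σ_{|ℓ|+|ℓ̃|=r+2} c_{ℓ,ℓ̃} u^ℓ v^ℓ̃ ∈ P_{r+2}, let χ = Σ_{ℓ≠ℓ̃} (c_{ℓ,ℓ̃} / (i ω·(ℓ−ℓ̃))) u^ℓ v^ℓ̃ and Z = Σ_{2|ℓ|=r+2} c_{ℓ,ℓ} u^ℓ v^ℓ, and let α = min{ |ω·(ℓ−ℓ̃)| : ℓ ≠ ℓ̃, |ℓ|+|ℓ̃| = r+2 } > 0. Then ‖Z‖ ≤ ‖f‖ and ‖χ‖ ≤ ‖f‖/α. -/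
open MvPolynomial

namespace MvPolynomial

variable {σ R : Type*} [CommSemiring R]

open Classical in
lemma coeff_sum_monomial (S : Finset (σ →₀ ℕ)) (c : (σ →₀ ℕ) → R) (d : σ →₀ ℕ) :
    coeff d (∑ e ∈ S, monomial e (c e)) = if d ∈ S then c d else 0 := by
  simp only [coeff_sum, coeff_monomial, Finset.sum_ite_eq']

lemma IsHomogeneous.sum_inl_add_inr_of_mem_support {ι : Type*} [Fintype ι]
    {f : MvPolynomial (ι ⊕ ι) R} {m : ℕ} (hf : f.IsHomogeneous m) {d : ι ⊕ ι →₀ ℕ}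
    (hd : d ∈ f.support) : ∑ j, (d (Sum.inl j) + d (Sum.inr j)) = m := by
  have hdeg : ∑ i, d i = m := by
    simpa [Finsupp.weight_apply, Finsupp.sum_fintype] using hf (mem_support_iff.mp hd)
  rwa [Fintype.sum_sum_type, ← Finset.sum_add_distrib] at hdeg

end MvPolynomial

lemma polyNorm_sum_monomial {n : ℕ} (S : Finset ((Fin n ⊕ Fin n) →₀ ℕ))
    (c : ((Fin n ⊕ Fin n) →₀ ℕ) → ℂ) :
    polyNorm n (∑ d ∈ S, monomial d (c d)) = ∑ d ∈ S, ‖c d‖ := by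
  classical
  have hsupp : (∑ d ∈ S, monomial d (c d)).support ⊆ S := fun d hd => by
    by_contra hdS
    exact mem_support_iff.mp hd (by rw [coeff_sum_monomial, if_neg hdS])
  rw [polyNorm, Finset.sum_subset hsupp fun d _ hd => by rw [notMem_support_iff.mp hd, norm_zero]]
  exact Finset.sum_congr rfl fun d hd => by rw [coeff_sum_monomial, if_pos hd]

lemma polyNorm_normalPart_le (n : ℕ) (f : MvPolynomial (Fin n ⊕ Fin n) ℂ) :
    polyNorm n (normalPart n f) ≤ polyNorm n f := by
  rw [normalPart, polyNorm_sum_monomial, polyNorm]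
  exact Finset.sum_le_sum_of_subset_of_nonneg (Finset.filter_subset _ _)
    fun _ _ _ => norm_nonneg _

lemma norm_div_I_mul_ofReal (c : ℂ) (s : ℝ) : ‖c / (Complex.I * s)‖ = ‖c‖ / |s| := by
  rw [norm_div, norm_mul, Complex.norm_I, one_mul, Complex.norm_real, Real.norm_eq_abs]

lemma polyNorm_genFun_le {n : ℕ} (ω : Fin n → ℝ) {α : ℝ} (hα : 0 < α)
    (f : MvPolynomial (Fin n ⊕ Fin n) ℂ)
    (hdiv : ∀ d ∈ f.support, (∃ j, d (Sum.inl j) ≠ d (Sum.inr j)) →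
      α ≤ |∑ j, ω j * ((d (Sum.inl j) : ℝ) - (d (Sum.inr j) : ℝ))|) :
    polyNorm n (genFun n ω f) ≤ polyNorm n f / α := by
  rw [genFun, polyNorm_sum_monomial, polyNorm, Finset.sum_div]
  calc _ ≤ ∑ d ∈ f.support.filter (fun d => ∃ j, d (Sum.inl j) ≠ d (Sum.inr j)),
          ‖coeff d f‖ / α := by
        refine Finset.sum_le_sum fun d hd => ?_
        obtain ⟨hdf, hoff⟩ := Finset.mem_filter.mp hd
        rw [norm_div_I_mul_ofReal]
        exact div_le_div_of_nonneg_left (norm_nonneg _) hα (hdiv d hdf hoff)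
    _ ≤ _ := Finset.sum_le_sum_of_subset_of_nonneg (Finset.filter_subset _ _)
          fun _ _ _ => div_nonneg (norm_nonneg _) hα.le

theorem stmt6_general (n : ℕ) (r : ℕ) (ω : Fin n → ℝ) (α : ℝ) (hα : 0 < α)
    (hmin : ∀ ℓ ℓt : Fin n → ℕ, ℓ ≠ ℓt → (∑ j : Fin n, (ℓ j + ℓt j)) = r + 2 →
      α ≤ |∑ j : Fin n, ω j * ((ℓ j : ℝ) - (ℓt j : ℝ))|)
    (f : MvPolynomial (Fin n ⊕ Fin n) ℂ) (hf : f.IsHomogeneous (r + 2)) :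
    polyNorm n (normalPart n f) ≤ polyNorm n f ∧
      polyNorm n (genFun n ω f) ≤ polyNorm n f / α := by
  refine ⟨polyNorm_normalPart_le n f, polyNorm_genFun_le ω hα f fun d hd ⟨j, hj⟩ => ?_⟩
  exact hmin _ _ (fun h => hj (congrFun h j)) (hf.sum_inl_add_inr_of_mem_support hd)

theorem stmt6 (n : ℕ) (hn : 1 ≤ n) (r : ℕ) (ω : Fin n → ℝ) (α : ℝ) (hα : 0 < α)
    (hmin : ∀ ℓ ℓt : Fin n → ℕ, ℓ ≠ ℓt → (∑ j : Fin n, (ℓ j + ℓt j)) = r + 2 →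
      α ≤ |∑ j : Fin n, ω j * ((ℓ j : ℝ) - (ℓt j : ℝ))|)
    (f : MvPolynomial (Fin n ⊕ Fin n) ℂ) (hf : f.IsHomogeneous (r + 2)) :
    polyNorm n (normalPart n f) ≤ polyNorm n f ∧
      polyNorm n (genFun n ω f) ≤ polyNorm n f / α :=
  stmt6_general n r ω α hα hmin f hf
end
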